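/- arXiv:2108.12447 — 3 statements merged into one kernel-verified Lean document; each statement's English description precedes it below -/
import Mathlib

section
/- Let U be in SpSt(2n,2k) and Δ in R^{2n×2k} with U^+Δ = -Δ^+U. Define Ω̃ := (I_{2n} - (1/2) U U^+) Δ U^+ - U Δ^+ (I_{2n} - (1/2) U U^+). Then Ω̃ is Hamiltonian (Ω̃^+ = -Ω̃) and Ω̃ U = Δ. -/
open Matrix

noncomputable section

/-- The standard symplectic matrix `J = [[0, I],[-I, 0]]` of size `2m`. -/
def Jmat (m : ℕ) : Matrix (Fin m ⊕ Fin m) (Fin m ⊕ Fin m) ℝ :=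
  Matrix.fromBlocks 0 1 (-1) 0

/-- The symplectic inverse `A⁺ = J₂ₖᵀ Aᵀ J₂ₙ` of a `2n × 2k` real matrix. -/
def sympInv {n k : ℕ} (A : Matrix (Fin n ⊕ Fin n) (Fin k ⊕ Fin k) ℝ) :
    Matrix (Fin k ⊕ Fin k) (Fin n ⊕ Fin n) ℝ :=
  (Jmat k)ᵀ * Aᵀ * Jmat n

/-!
Write `P = I - ½ U U⁺` and `A = P Δ U⁺`. Since `⁺` is an additive anti-involution fixing `I`,
`P⁺ = P` and `Ω̃ = A - A⁺`, which is Hamiltonian for any `A`. From `U⁺ U = I` we get `P U = ½ U`, so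
`Ω̃ U = P Δ - ½ U Δ⁺ U = Δ - ½ U (U⁺ Δ + Δ⁺ U) = Δ`.
-/

lemma Jmat_mul_transpose (m : ℕ) : Jmat m * (Jmat m)ᵀ = 1 := by
  simp [Jmat, fromBlocks_transpose, fromBlocks_multiply, fromBlocks_one]

lemma Jmat_transpose_mul (m : ℕ) : (Jmat m)ᵀ * Jmat m = 1 := by
  simp [Jmat, fromBlocks_transpose, fromBlocks_multiply, fromBlocks_one]

lemma Jmat_mul_Jmat (m : ℕ) : Jmat m * Jmat m = -1 := by
  rw [Jmat, fromBlocks_multiply, ← fromBlocks_one, fromBlocks_neg]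
  simp

lemma Jmat_transpose_mul_transpose (m : ℕ) : (Jmat m)ᵀ * (Jmat m)ᵀ = -1 := by
  rw [← transpose_mul, Jmat_mul_Jmat, transpose_neg, transpose_one]

section SympInv

variable {n k m : ℕ}

lemma sympInv_mul (A : Matrix (Fin n ⊕ Fin n) (Fin k ⊕ Fin k) ℝ)
    (B : Matrix (Fin k ⊕ Fin k) (Fin m ⊕ Fin m) ℝ) :
    sympInv (A * B) = sympInv B * sympInv A := by
  simp only [sympInv, transpose_mul, Matrix.mul_assoc]
  rw [← Matrix.mul_assoc (Jmat k), Jmat_mul_transpose, Matrix.one_mul]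

lemma sympInv_sympInv (A : Matrix (Fin n ⊕ Fin n) (Fin k ⊕ Fin k) ℝ) :
    sympInv (sympInv A) = A := by
  simp only [sympInv, transpose_mul, transpose_transpose, Matrix.mul_assoc]
  rw [Jmat_mul_Jmat, ← Matrix.mul_assoc, Jmat_transpose_mul_transpose]
  simp

lemma sympInv_one : sympInv (1 : Matrix (Fin n ⊕ Fin n) (Fin n ⊕ Fin n) ℝ) = 1 := by
  rw [sympInv, transpose_one, Matrix.mul_one, Jmat_transpose_mul]

lemma sympInv_sub (A B : Matrix (Fin n ⊕ Fin n) (Fin k ⊕ Fin k) ℝ) :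
    sympInv (A - B) = sympInv A - sympInv B := by
  rw [sympInv, transpose_sub, Matrix.mul_sub, Matrix.sub_mul, sympInv, sympInv]

lemma sympInv_smul (c : ℝ) (A : Matrix (Fin n ⊕ Fin n) (Fin k ⊕ Fin k) ℝ) :
    sympInv (c • A) = c • sympInv A := by
  rw [sympInv, transpose_smul, Matrix.mul_smul, Matrix.smul_mul, sympInv]

lemma sympInv_sub_sympInv (A : Matrix (Fin n ⊕ Fin n) (Fin n ⊕ Fin n) ℝ) :
    sympInv (A - sympInv A) = -(A - sympInv A) := by
  rw [sympInv_sub, sympInv_sympInv, neg_sub]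

lemma sympInv_one_sub_smul_mul_sympInv (c : ℝ) (U : Matrix (Fin n ⊕ Fin n) (Fin k ⊕ Fin k) ℝ) :
    sympInv (1 - c • (U * sympInv U)) = 1 - c • (U * sympInv U) := by
  rw [sympInv_sub, sympInv_one, sympInv_smul, sympInv_mul, sympInv_sympInv]

lemma one_sub_smul_mul_sympInv_mul_of_sympInv_mul_self (c : ℝ)
    {U : Matrix (Fin n ⊕ Fin n) (Fin k ⊕ Fin k) ℝ} (hU : sympInv U * U = 1) :
    (1 - c • (U * sympInv U)) * U = (1 - c) • U := by
  rw [Matrix.sub_mul, Matrix.one_mul, Matrix.smul_mul, Matrix.mul_assoc, hU, Matrix.mul_one,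
    sub_smul, one_smul]

end SympInv

theorem stmt_6 (n k : ℕ) (U Δ : Matrix (Fin n ⊕ Fin n) (Fin k ⊕ Fin k) ℝ)
    (hU : sympInv U * U = 1) (hΔ : sympInv U * Δ = -(sympInv Δ * U)) :
    sympInv ((1 - (1/2 : ℝ) • (U * sympInv U)) * Δ * sympInv U
        - U * sympInv Δ * (1 - (1/2 : ℝ) • (U * sympInv U)))
      = -((1 - (1/2 : ℝ) • (U * sympInv U)) * Δ * sympInv U
        - U * sympInv Δ * (1 - (1/2 : ℝ) • (U * sympInv U))) ∧
    ((1 - (1/2 : ℝ) • (U * sympInv U)) * Δ * sympInv U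
        - U * sympInv Δ * (1 - (1/2 : ℝ) • (U * sympInv U))) * U = Δ := by
  set P := 1 - (1/2 : ℝ) • (U * sympInv U) with hP
  have hPP : sympInv P = P := sympInv_one_sub_smul_mul_sympInv _ U
  have hPU : P * U = (1/2 : ℝ) • U := by
    rw [one_sub_smul_mul_sympInv_mul_of_sympInv_mul_self _ hU]
    norm_num
  have hA : sympInv (P * Δ * sympInv U) = U * sympInv Δ * P := by
    rw [sympInv_mul, sympInv_mul, sympInv_sympInv, hPP, Matrix.mul_assoc]
  refine ⟨hA ▸ sympInv_sub_sympInv (P * Δ * sympInv U), ?_⟩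
  calc (P * Δ * sympInv U - U * sympInv Δ * P) * U
      = P * Δ - (1/2 : ℝ) • (U * (sympInv Δ * U)) := by
        rw [Matrix.sub_mul, Matrix.mul_assoc _ (sympInv U), hU, Matrix.mul_one,
          Matrix.mul_assoc _ P, hPU, Matrix.mul_smul, Matrix.mul_assoc]
    _ = Δ - (1/2 : ℝ) • (U * (sympInv U * Δ + sympInv Δ * U)) := by
        rw [hP, Matrix.sub_mul, Matrix.one_mul, Matrix.smul_mul, Matrix.mul_assoc, Matrix.mul_add,
          smul_add]
        abel
    _ = Δ := by rw [hΔ, neg_add_cancel, Matrix.mul_zero, smul_zero, sub_zero]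
end
end

section
/- For X in R^{n×k} and Y in R^{n×k} with Y^T X invertible, the matrix exponential of the rank-deficient product satisfies exp(X Y^T) = I_n + X (exp(Y^T X) - I_k) (Y^T X)^{-1} Y^T. -/
/-!
Since `(X Yᵀ)^(m+1) = X (Yᵀ X)^m Yᵀ`, the exponential series of `X Yᵀ` sums to
`1 + X φ₁(Yᵀ X) Yᵀ`, where `φ₁(z) = ∑ z^m / (m+1)!`. Shifting the exponential series of
`M = Yᵀ X` in the same way gives `exp M - 1 = φ₁(M) M`, so `φ₁(M) = (exp M - 1) M⁻¹`
when `M` is invertible.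
-/

open Matrix

noncomputable section

open NormedSpace Nat

section PhiOne

variable (𝕂 : Type*) {𝔸 : Type*} [Field 𝕂] [Ring 𝔸] [Algebra 𝕂 𝔸] [TopologicalSpace 𝔸]

/-- The entire function `φ₁(z) = (exp z - 1) / z` of exponential integrators. -/
def phiOne (a : 𝔸) : 𝔸 :=
  ∑' m : ℕ, ((m + 1)! : 𝕂)⁻¹ • a ^ m

variable {𝕂} [CharZero 𝕂] [IsTopologicalRing 𝔸] [T2Space 𝔸]

theorem exp_eq_one_add_of_hasSum {a s : 𝔸}
    (h : HasSum (fun m : ℕ => ((m + 1)! : 𝕂)⁻¹ • a ^ (m + 1)) s) : exp a = 1 + s := by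
  rw [exp_eq_tsum 𝕂]
  simpa using (HasSum.zero_add (f := fun m => (m ! : 𝕂)⁻¹ • a ^ m) h).tsum_eq

theorem exp_eq_one_add_phiOne_mul {a : 𝔸}
    (h : Summable fun m : ℕ => ((m + 1)! : 𝕂)⁻¹ • a ^ m) : exp a = 1 + phiOne 𝕂 a * a :=
  exp_eq_one_add_of_hasSum <| by
    simpa only [phiOne, pow_succ, smul_mul_assoc] using h.hasSum.mul_right a

end PhiOne

theorem summable_phiOne_series {𝕂 𝔸 : Type*} [RCLike 𝕂] [NormedRing 𝔸] [NormedAlgebra 𝕂 𝔸]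
    [CompleteSpace 𝔸] (a : 𝔸) : Summable fun m : ℕ => ((m + 1)! : 𝕂)⁻¹ • a ^ m := by
  refine .of_norm_bounded (norm_expSeries_summable' (𝕂 := 𝕂) a) fun m => ?_
  rw [norm_smul, norm_smul, norm_inv, norm_inv, RCLike.norm_natCast, RCLike.norm_natCast]
  gcongr
  exact m.le_succ

theorem HasSum.matrix_mul_mul {ι l m n α : Type*} [Fintype m] [Fintype n] [Semiring α]
    [TopologicalSpace α] [IsTopologicalSemiring α] (X : Matrix l m α) (Y : Matrix n l α)
    {f : ι → Matrix m n α} {a : Matrix m n α} (h : HasSum f a) :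
    HasSum (fun i => X * f i * Y) (X * a * Y) :=
  h.map ((addMonoidHomMulRight Y).comp (addMonoidHomMulLeft X))
    ((continuous_const.matrix_mul continuous_id).matrix_mul continuous_const)

namespace Matrix

variable {m n : Type*} [Fintype m] [Fintype n] [DecidableEq m] [DecidableEq n]

theorem mul_pow_succ {α : Type*} [Semiring α] (X : Matrix m n α) (Y : Matrix n m α) (i : ℕ) :
    (X * Y) ^ (i + 1) = X * (Y * X) ^ i * Y := by
  induction i with
  | zero => simp
  | succ i ih => rw [pow_succ, ih, pow_succ]; simp only [Matrix.mul_assoc]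

variable {𝕂 : Type*} [RCLike 𝕂]

theorem summable_phiOne_series (A : Matrix n n 𝕂) :
    Summable fun i : ℕ => ((i + 1)! : 𝕂)⁻¹ • A ^ i :=
  -- any submultiplicative norm inducing the entrywise topology will do
  open scoped Matrix.Norms.Operator in _root_.summable_phiOne_series A

theorem exp_mul_eq_one_add_mul_phiOne_mul (X : Matrix m n 𝕂) (Y : Matrix n m 𝕂) :
    exp (X * Y) = 1 + X * phiOne 𝕂 (Y * X) * Y := by
  refine exp_eq_one_add_of_hasSum (𝕂 := 𝕂) ?_
  simpa only [phiOne, mul_pow_succ, Matrix.mul_smul, Matrix.smul_mul] using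
    (summable_phiOne_series (Y * X)).hasSum.matrix_mul_mul X Y

end Matrix

theorem stmt_8 (n k : ℕ) (X Y : Matrix (Fin n) (Fin k) ℝ)
    (hInv : IsUnit (Yᵀ * X)) :
    NormedSpace.exp (X * Yᵀ)
      = 1 + X * (NormedSpace.exp (Yᵀ * X) - 1) * (Yᵀ * X)⁻¹ * Yᵀ := by
  rw [exp_mul_eq_one_add_mul_phiOne_mul (𝕂 := ℝ),
    exp_eq_one_add_phiOne_mul (summable_phiOne_series (Yᵀ * X)), add_sub_cancel_left,
    ← Matrix.mul_assoc X, mul_nonsing_inv_cancel_right _ _ ((isUnit_iff_isUnit_det _).mp hInv)]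
end
end

section
/- Let P, F in R^{2n×2n} with P^2 = P, P^+ = P, F^2 = F, F^+ = F. Suppose Ω̃ in R^{2n×2n} satisfies exp(2Ω̃) = (I - 2F)(I - 2P) and (I - 2P) Ω̃ (I - 2P) = -Ω̃. Then exp(Ω̃) P exp(-Ω̃) = F. -/
open Matrix

noncomputable section

/-!
`S = 1 - 2P` is an involution with `S Ω S = -Ω`, so `S exp(Ω) S = exp(-Ω)` and hence
`exp(Ω) S exp(-Ω) = exp(2Ω) S = (1 - 2F) S S = 1 - 2F`. Since conjugation is linear, the left side
is also `1 - 2 exp(Ω) P exp(-Ω)`, and cancelling the factor `2` gives the claim.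
-/

theorem IsIdempotentElem.one_sub_two_nsmul_mul_self {R : Type*} [Ring R] {P : R}
    (hP : IsIdempotentElem P) : (1 - 2 • P) * (1 - 2 • P) = 1 := by
  simp only [mul_sub, sub_mul, mul_one, one_mul, smul_mul_smul_comm, hP.eq]
  abel

theorem mul_one_sub_two_nsmul_mul_of_mul_eq_one {R : Type*} [Ring R] {E E' : R}
    (h : E * E' = 1) (P : R) : E * (1 - 2 • P) * E' = 1 - 2 • (E * P * E') := by
  simp only [mul_sub, sub_mul, mul_one, mul_smul_comm, smul_mul_assoc, h]

namespace Matrix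

variable {m 𝔸 : Type*} [Fintype m] [DecidableEq m] [NormedRing 𝔸] [NormedAlgebra ℚ 𝔸]
  [CompleteSpace 𝔸]

theorem exp_mul_exp_neg (Ω : Matrix m m 𝔸) : NormedSpace.exp Ω * NormedSpace.exp (-Ω) = 1 := by
  rw [← exp_add_of_commute Ω (-Ω) (Commute.neg_right (Commute.refl Ω)), add_neg_cancel,
    NormedSpace.exp_zero]

theorem exp_mul_mul_exp_neg_of_involutive {S Ω : Matrix m m 𝔸} (hS : S * S = 1)
    (hflip : S * Ω * S = -Ω) :
    NormedSpace.exp Ω * S * NormedSpace.exp (-Ω) = NormedSpace.exp Ω * NormedSpace.exp Ω * S := by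
  have hconj : S * NormedSpace.exp Ω * S = NormedSpace.exp (-Ω) := by
    simpa [hflip] using (exp_units_conj ⟨S, S, hS, hS⟩ Ω).symm
  rw [← hconj, ← mul_assoc, ← mul_assoc, mul_assoc _ S S, hS, mul_one]

end Matrix

theorem stmt_10_general (n : ℕ) (P F Ω : Matrix (Fin n ⊕ Fin n) (Fin n ⊕ Fin n) ℝ)
    (hP2 : P * P = P)
    (hexp : NormedSpace.exp ((2 : ℝ) • Ω) = (1 - 2 • F) * (1 - 2 • P))
    (hflip : (1 - 2 • P) * Ω * (1 - 2 • P) = -Ω) :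
    NormedSpace.exp Ω * P * NormedSpace.exp (-Ω) = F := by
  have hS : (1 - 2 • P) * (1 - 2 • P) = 1 := IsIdempotentElem.one_sub_two_nsmul_mul_self hP2
  have key : 1 - 2 • (NormedSpace.exp Ω * P * NormedSpace.exp (-Ω)) = 1 - 2 • F := calc
    _ = NormedSpace.exp Ω * (1 - 2 • P) * NormedSpace.exp (-Ω) :=
      (mul_one_sub_two_nsmul_mul_of_mul_eq_one (Matrix.exp_mul_exp_neg Ω) P).symm
    _ = NormedSpace.exp Ω * NormedSpace.exp Ω * (1 - 2 • P) :=
      Matrix.exp_mul_mul_exp_neg_of_involutive hS hflip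
    _ = NormedSpace.exp ((2 : ℝ) • Ω) * (1 - 2 • P) := by
      rw [two_smul ℝ Ω, Matrix.exp_add_of_commute Ω Ω (Commute.refl Ω)]
    _ = 1 - 2 • F := by rw [hexp, mul_assoc, hS, mul_one]
  -- `Matrix` has no `ℕ`-torsion-freeness instance, so the `2` is cancelled as a real scalar.
  rw [← ofNat_smul_eq_nsmul ℝ 2, ← ofNat_smul_eq_nsmul ℝ 2] at key
  exact smul_right_injective _ two_ne_zero (sub_right_injective key)

theorem stmt_10 (n : ℕ) (P F Ω : Matrix (Fin n ⊕ Fin n) (Fin n ⊕ Fin n) ℝ)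
    (hP2 : P * P = P) (hPplus : sympInv P = P)
    (hF2 : F * F = F) (hFplus : sympInv F = F)
    (hexp : NormedSpace.exp ((2 : ℝ) • Ω) = (1 - 2 • F) * (1 - 2 • P))
    (hflip : (1 - 2 • P) * Ω * (1 - 2 • P) = -Ω) :
    NormedSpace.exp Ω * P * NormedSpace.exp (-Ω) = F :=
  stmt_10_general n P F Ω hP2 hexp hflip
end
end
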